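/- Let n ≥ 4 and let I' be an order ideal of F₃(n) with max ⋃ I' = n. Let G' be the set of ⪯-maximal elements of I' and H' the set of ⪯-minimal elements of F₃(n)∖I'. Then #G' + #H' ≤ n−3. -/

import Mathlib

/-- The 4-element set `{i, i+1, j, j+1}`, denoted `(i,j)` in the paper. -/
def pairSet (i j : ℕ) : Finset ℕ := {i, i + 1, j, j + 1}

/-- Membership in the collection `F₃(n)` of 4-element subsets of `{1,…,n}`
of the form `{i, i+1, j, j+1}` with `1 ≤ i`, `i+2 ≤ j`, `j+1 ≤ n`. -/
def memF3 (n : ℕ) (f : Finset ℕ) : Prop :=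
  ∃ i j : ℕ, 1 ≤ i ∧ i + 2 ≤ j ∧ j + 1 ≤ n ∧ f = pairSet i j

/-- The partial order `⪯` on finite subsets of `ℕ` of equal cardinality:
componentwise comparison of the increasingly sorted lists of elements. -/
def squeezedLE (f g : Finset ℕ) : Prop :=
  List.Forall₂ (· ≤ ·) (f.sort (· ≤ ·)) (g.sort (· ≤ ·))

/-- `I` is an order ideal of `F₃(n)` w.r.t. `⪯`. -/
def IsIdealF3 (n : ℕ) (I : Set (Finset ℕ)) : Prop :=
  (∀ f ∈ I, memF3 n f) ∧
  ∀ f g : Finset ℕ, memF3 n f → g ∈ I → squeezedLE f g → f ∈ I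

/-- `max ⋃ I`, the largest vertex used by the collection `I`. -/
noncomputable def maxVertex (I : Set (Finset ℕ)) : ℕ :=
  sSup (⋃ f ∈ I, (f : Set ℕ))

/-- `0 * K = {{0} ∪ f : f ∈ K}`. -/
def coneZero (K : Set (Finset ℕ)) : Set (Finset ℕ) := (insert 0) '' K

/-- A facet of the squeezed sphere `S(I)`: a 4-element set contained in
exactly one member of `I`. -/
def isFacetOfS (I : Set (Finset ℕ)) (F : Finset ℕ) : Prop :=
  F.card = 4 ∧ ∃! g, g ∈ I ∧ F ⊆ g

/-- The gap of `(i,j) = {i, i+1, j, j+1}`, i.e. `j - i - 2`. -/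
def gapOf (f : Finset ℕ) : ℕ :=
  f.sup id - (f.sort (· ≤ ·)).headI - 3

/-- `m` is a `⪯`-minimal element of the set `S`. -/
def IsMinIn (S : Set (Finset ℕ)) (m : Finset ℕ) : Prop :=
  m ∈ S ∧ ∀ x ∈ S, squeezedLE x m → x = m

/-- `m` is a `⪯`-maximal element of the set `S`. -/
def IsMaxIn (S : Set (Finset ℕ)) (m : Finset ℕ) : Prop :=
  m ∈ S ∧ ∀ x ∈ S, squeezedLE m x → x = m

/-!
An element of `F₃(n)` is `(i,j)` with gap `j - i - 2 ∈ {0, …, n-4}`, and two pairs with the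
same gap are `⪯`-comparable. Hence the maximal elements `G'` of `I'` have distinct gaps, and so
do the minimal elements `H'` of the complement. A gap cannot be shared across `G'` and `H'`:
for `(i,j) ∈ G'` and `(i',j') ∈ H'` with `i < i'`, minimality forces `(i'-1, j'-1) ∈ I'`,
maximality forces it to be `(i,j)`, and then `(i, j+1)` can lie neither in `I'` nor outside it.
So the gap map is injective on `G' ∪ H'`, which gives `#G' + #H' ≤ n - 3`.
-/

lemma pairSet_sort {i j : ℕ} (h : i + 2 ≤ j) :
    (pairSet i j).sort (· ≤ ·) = [i, i + 1, j, j + 1] := by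
  have hsorted : [i, i + 1, j, j + 1].Pairwise (· < ·) := by
    rw [← List.isChain_iff_pairwise]
    simp only [List.isChain_cons_cons, List.isChain_singleton, and_true]
    omega
  have htoFinset : [i, i + 1, j, j + 1].toFinset = pairSet i j := by
    simp [pairSet, Finset.insert_comm]
  rw [← htoFinset, List.toFinset_sort _ hsorted.nodup]
  exact hsorted.imp le_of_lt

lemma pairSet_inj {i j i' j' : ℕ} (h : i + 2 ≤ j) (h' : i' + 2 ≤ j') :
    pairSet i j = pairSet i' j' ↔ i = i' ∧ j = j' := by
  constructor
  · intro he
    have hsort := pairSet_sort h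
    rw [he, pairSet_sort h'] at hsort
    simp only [List.cons.injEq] at hsort
    omega
  · rintro ⟨rfl, rfl⟩
    rfl

lemma squeezedLE_pairSet_iff {i j i' j' : ℕ} (h : i + 2 ≤ j) (h' : i' + 2 ≤ j') :
    squeezedLE (pairSet i j) (pairSet i' j') ↔ i ≤ i' ∧ j ≤ j' := by
  simp only [squeezedLE, pairSet_sort h, pairSet_sort h', List.forall₂_cons,
    List.Forall₂.nil, and_true]
  omega

lemma gapOf_pairSet {i j : ℕ} (h : i + 2 ≤ j) : gapOf (pairSet i j) = j - i - 2 := by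
  have hsup : (pairSet i j).sup id = j + 1 := by
    simp only [pairSet, Finset.sup_insert, Finset.sup_singleton, id]
    omega
  rw [gapOf, hsup, pairSet_sort h, List.headI_cons]
  omega

lemma gapOf_lt_of_memF3 {n : ℕ} {f : Finset ℕ} (hf : memF3 n f) : gapOf f < n - 3 := by
  obtain ⟨i, j, hi, hij, hjn, rfl⟩ := hf
  rw [gapOf_pairSet hij]
  omega

lemma squeezedLE_total_of_gapOf_eq {n : ℕ} {f g : Finset ℕ} (hf : memF3 n f) (hg : memF3 n g)
    (hgap : gapOf f = gapOf g) : squeezedLE f g ∨ squeezedLE g f := by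
  obtain ⟨i, j, -, hij, -, rfl⟩ := hf
  obtain ⟨i', j', -, hij', -, rfl⟩ := hg
  rw [gapOf_pairSet hij, gapOf_pairSet hij'] at hgap
  rw [squeezedLE_pairSet_iff hij hij', squeezedLE_pairSet_iff hij' hij]
  omega

section Extremal

variable {n : ℕ} {S : Set (Finset ℕ)} {f g : Finset ℕ}

lemma eq_of_isMaxIn_of_gapOf_eq (hS : ∀ x ∈ S, memF3 n x) (hf : IsMaxIn S f)
    (hg : IsMaxIn S g) (hgap : gapOf f = gapOf g) : f = g := by
  rcases squeezedLE_total_of_gapOf_eq (hS f hf.1) (hS g hg.1) hgap with hfg | hgf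
  · exact (hf.2 g hg.1 hfg).symm
  · exact hg.2 f hf.1 hgf

lemma eq_of_isMinIn_of_gapOf_eq (hS : ∀ x ∈ S, memF3 n x) (hf : IsMinIn S f)
    (hg : IsMinIn S g) (hgap : gapOf f = gapOf g) : f = g := by
  rcases squeezedLE_total_of_gapOf_eq (hS f hf.1) (hS g hg.1) hgap with hfg | hgf
  · exact hg.2 f hf.1 hfg
  · exact (hf.2 g hg.1 hgf).symm

end Extremal

section Ideal

variable {n : ℕ} {I : Set (Finset ℕ)}

lemma mem_of_squeezedLE_of_isMinIn_compl {h x : Finset ℕ}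
    (hh : IsMinIn {x | memF3 n x ∧ x ∉ I} h) (hx : memF3 n x) (hxh : squeezedLE x h)
    (hne : x ≠ h) : x ∈ I := by
  by_contra hxI
  exact hne (hh.2 x ⟨hx, hxI⟩ hxh)

lemma gapOf_ne_of_isMaxIn_of_isMinIn (hI : IsIdealF3 n I) {g h : Finset ℕ} (hg : IsMaxIn I g)
    (hh : IsMinIn {x | memF3 n x ∧ x ∉ I} h) : gapOf g ≠ gapOf h := by
  intro hgap
  obtain ⟨i, j, hi, hij, hjn, rfl⟩ := hI.1 g hg.1
  obtain ⟨i', j', hi', hij', hjn', rfl⟩ := hh.1.1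
  rw [gapOf_pairSet hij, gapOf_pairSet hij'] at hgap
  rcases le_or_gt i' i with hle | hlt
  · exact hh.1.2 (hI.2 _ _ hh.1.1 hg.1 ((squeezedLE_pairSet_iff hij' hij).2 ⟨hle, by omega⟩))
  have hshift : i' - 1 + 2 ≤ j' - 1 := by omega
  have hshiftI : pairSet (i' - 1) (j' - 1) ∈ I :=
    mem_of_squeezedLE_of_isMinIn_compl hh ⟨i' - 1, j' - 1, by omega, hshift, by omega, rfl⟩
      ((squeezedLE_pairSet_iff hshift hij').2 ⟨by omega, by omega⟩)
      (fun he => by have := (pairSet_inj hshift hij').1 he; omega)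
  obtain ⟨hii', hjj'⟩ : i' - 1 = i ∧ j' - 1 = j := (pairSet_inj hshift hij).1
    (hg.2 _ hshiftI ((squeezedLE_pairSet_iff hij hshift).2 ⟨by omega, by omega⟩))
  have hwide : i + 2 ≤ j + 1 := by omega
  by_cases hwideI : pairSet i (j + 1) ∈ I
  · have := (pairSet_inj hwide hij).1
      (hg.2 _ hwideI ((squeezedLE_pairSet_iff hij hwide).2 ⟨le_rfl, by omega⟩))
    omega
  · have := (pairSet_inj hwide hij').1
      (hh.2 _ ⟨⟨i, j + 1, hi, hwide, by omega, rfl⟩, hwideI⟩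
        ((squeezedLE_pairSet_iff hwide hij').2 ⟨by omega, by omega⟩))
    omega

lemma injOn_gapOf_maximal_union_minimal (hI : IsIdealF3 n I) :
    Set.InjOn gapOf ({g | IsMaxIn I g} ∪ {h | IsMinIn {x | memF3 n x ∧ x ∉ I} h}) := by
  have hcompl : ∀ x ∈ {x | memF3 n x ∧ x ∉ I}, memF3 n x := fun x hx => hx.1
  rintro f (hf | hf) f' (hf' | hf') hgap
  · exact eq_of_isMaxIn_of_gapOf_eq hI.1 hf hf' hgap
  · exact absurd hgap (gapOf_ne_of_isMaxIn_of_isMinIn hI hf hf')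
  · exact absurd hgap.symm (gapOf_ne_of_isMaxIn_of_isMinIn hI hf' hf)
  · exact eq_of_isMinIn_of_gapOf_eq hcompl hf hf' hgap

end Ideal

theorem card_maximal_add_card_minimal_general (n : ℕ)
    (I : Set (Finset ℕ)) (hI : IsIdealF3 n I) :
    {g : Finset ℕ | IsMaxIn I g}.Finite ∧
    {h : Finset ℕ | IsMinIn {x | memF3 n x ∧ x ∉ I} h}.Finite ∧
    {g : Finset ℕ | IsMaxIn I g}.ncard +
      {h : Finset ℕ | IsMinIn {x | memF3 n x ∧ x ∉ I} h}.ncard ≤ n - 3 := by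
  set G := {g : Finset ℕ | IsMaxIn I g}
  set H := {h : Finset ℕ | IsMinIn {x | memF3 n x ∧ x ∉ I} h}
  have hmaps : Set.MapsTo gapOf (G ∪ H) (Finset.range (n - 3) : Set ℕ) := by
    rintro f (hf | hf)
    · exact Finset.mem_coe.2 (Finset.mem_range.2 (gapOf_lt_of_memF3 (hI.1 f hf.1)))
    · exact Finset.mem_coe.2 (Finset.mem_range.2 (gapOf_lt_of_memF3 hf.1.1))
  have hinj := injOn_gapOf_maximal_union_minimal hI
  have hfin : (G ∪ H).Finite := Set.Finite.of_injOn hmaps hinj (Finset.finite_toSet _)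
  have hG : G.Finite := hfin.subset Set.subset_union_left
  have hH : H.Finite := hfin.subset Set.subset_union_right
  have hdisj : Disjoint G H := Set.disjoint_left.2 fun f hfG hfH => hfH.1.2 hfG.1
  refine ⟨hG, hH, ?_⟩
  calc G.ncard + H.ncard = (G ∪ H).ncard := (Set.ncard_union_eq hdisj hG hH).symm
    _ ≤ (Finset.range (n - 3) : Set ℕ).ncard := Set.ncard_le_ncard_of_injOn gapOf hmaps hinj
    _ = n - 3 := by rw [Set.ncard_coe_finset, Finset.card_range]

/-- **Observation 2.** If `G'` is the set of `⪯`-maximal elements of an order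
ideal `I'` of `F₃(n)` with `max ⋃ I' = n`, and `H'` is the set of `⪯`-minimal
elements of `F₃(n) ∖ I'`, then `#G' + #H' ≤ n - 3`. -/
theorem card_maximal_add_card_minimal (n : ℕ) (hn : 4 ≤ n)
    (I : Set (Finset ℕ)) (hI : IsIdealF3 n I) (hmax : maxVertex I = n) :
    {g : Finset ℕ | IsMaxIn I g}.Finite ∧
    {h : Finset ℕ | IsMinIn {x | memF3 n x ∧ x ∉ I} h}.Finite ∧
    {g : Finset ℕ | IsMaxIn I g}.ncard +
      {h : Finset ℕ | IsMinIn {x | memF3 n x ∧ x ∉ I} h}.ncard ≤ n - 3 :=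
  card_maximal_add_card_minimal_general n I hI
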